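/- Continuity of the solution with respect to g: with T, K, u₀, ε, ρ, C, M as above, let g₁, g₂ be differentiable with gⱼ(0)=0, ‖gⱼ'‖_∞ ≤ M, and σ := ε M ‖K‖_{L¹}/C < 1. Let u_{p,j} ∈ B_ρ be the unique fixed point of Φⱼ(v) = ε T(K * (gⱼ∘(u₀+v))). Then ‖u_{p,1} - u_{p,2}‖_{L²} ≤ (ε/(1-σ)) · (‖K‖_{L¹}/C) · (‖u₀‖_{L²} + 1) · ‖g₁' - g₂'‖_{L^∞}. -/

import Mathlib

/-!
Young's inequality `‖K ⋆ h‖₂ ≤ ‖K‖₁ ‖h‖₂`, obtained from the weighted Cauchy–Schwarz bound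
`(∫ k(x - y) f(y) dy)² ≤ ‖k‖₁ ∫ k(x - y) f(y)² dy` and Tonelli, together with `‖T‖ ≤ 1/C`, shows
that `Φ₁` is a `σ`-contraction (`g₁` is `M`-Lipschitz) and that `Φ₁` and `Φ₂` differ at `u_p2` by
at most `ε ‖K‖₁ / C · δ ‖u₀ + u_p2‖` (`|g₁ z - g₂ z| ≤ δ |z|`, both vanishing at `0`). The a priori
estimate `‖x - u_p1‖ ≤ ‖x - Φ₁ x‖ / (1 - σ)` for the fixed point of a contraction, at `x = u_p2`,
gives the claim.
-/

open MeasureTheory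

open scoped ENNReal

theorem lintegral_mul_sq_le {α : Type*} [MeasurableSpace α] {ν : Measure α} {w f : α → ℝ≥0∞}
    (hw : AEMeasurable w ν) (hf : AEMeasurable f ν) :
    (∫⁻ a, w a * f a ∂ν) ^ 2 ≤ (∫⁻ a, w a ∂ν) * ∫⁻ a, w a * f a ^ 2 ∂ν := by
  have hsqrt : ∀ a b : ℝ≥0∞, a ^ (2⁻¹ : ℝ) * b ^ (2⁻¹ : ℝ) = (a * b) ^ (2⁻¹ : ℝ) := fun a b =>
    (ENNReal.mul_rpow_of_nonneg a b (by norm_num)).symm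
  have hint : ∀ a, w a ^ (2⁻¹ : ℝ) * (w a * f a ^ 2) ^ (2⁻¹ : ℝ) = w a * f a := fun a => by
    rw [hsqrt, show w a * (w a * f a ^ 2) = (w a * f a) ^ 2 by ring]
    exact_mod_cast ENNReal.pow_rpow_inv_natCast two_ne_zero _
  calc (∫⁻ a, w a * f a ∂ν) ^ 2
      = (∫⁻ a, w a ^ (2⁻¹ : ℝ) * (w a * f a ^ 2) ^ (2⁻¹ : ℝ) ∂ν) ^ 2 := by simp only [hint]
    _ ≤ ((∫⁻ a, w a ∂ν) ^ (2⁻¹ : ℝ) * (∫⁻ a, w a * f a ^ 2 ∂ν) ^ (2⁻¹ : ℝ)) ^ 2 :=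
        pow_le_pow_left₀ zero_le (ENNReal.lintegral_mul_norm_pow_le hw
          (hw.mul (hf.pow_const 2)) (by norm_num) (by norm_num) (by norm_num)) 2
    _ = _ := by
        rw [hsqrt]
        exact_mod_cast ENNReal.rpow_inv_natCast_pow two_ne_zero _

theorem eLpNorm_two_sq_eq_lintegral {α E : Type*} [MeasurableSpace α] {ν : Measure α}
    [NormedAddCommGroup E] (f : α → E) :
    eLpNorm f 2 ν ^ 2 = ∫⁻ a, ‖f a‖ₑ ^ 2 ∂ν := by
  simpa using eLpNorm_nnreal_pow_eq_lintegral (μ := ν) (f := f) (p := 2) two_ne_zero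

theorem abs_sub_le_of_abs_deriv_le {g : ℝ → ℝ} (hg : Differentiable ℝ g) {L : ℝ}
    (hgL : ∀ z, |deriv g z| ≤ L) (a b : ℝ) : |g a - g b| ≤ L * |a - b| :=
  convex_univ.norm_image_sub_le_of_norm_deriv_le (fun z _ => hg z) (fun z _ => hgL z)
    trivial trivial

theorem abs_sub_le_of_abs_deriv_sub_le {g₁ g₂ : ℝ → ℝ} (hg₁ : Differentiable ℝ g₁)
    (hg₂ : Differentiable ℝ g₂) (hg₁0 : g₁ 0 = 0) (hg₂0 : g₂ 0 = 0) {δ : ℝ}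
    (hδ : ∀ z, |deriv g₁ z - deriv g₂ z| ≤ δ) (z : ℝ) : |g₁ z - g₂ z| ≤ δ * |z| := by
  have hderiv : ∀ w, |deriv (g₁ - g₂) w| ≤ δ := fun w => by
    rw [deriv_sub (hg₁ w) (hg₂ w)]
    exact hδ w
  simpa [hg₁0, hg₂0] using abs_sub_le_of_abs_deriv_le (hg₁.sub hg₂) hderiv z 0

theorem MeasureTheory.MemLp.comp_of_abs_deriv_le {α : Type*} [MeasurableSpace α]
    {μ : Measure α} {p : ℝ≥0∞} {u : α → ℝ} (hu : MemLp u p μ) {g : ℝ → ℝ}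
    (hg : Differentiable ℝ g) (hg0 : g 0 = 0) {L : ℝ} (hgL : ∀ z, |deriv g z| ≤ L) :
    MemLp (fun a => g (u a)) p μ :=
  hu.of_le_mul (hg.continuous.comp_aestronglyMeasurable hu.1) <|
    Filter.Eventually.of_forall fun a => by
      simpa [hg0] using abs_sub_le_of_abs_deriv_le hg hgL (u a) 0

theorem norm_smul_map_sub_smul_map_le {E F : Type*} [SeminormedAddCommGroup E] [NormedSpace ℝ E]
    [SeminormedAddCommGroup F] [NormedSpace ℝ F] (T : E →ₗ[ℝ] F) {C : ℝ} (hC : 0 < C)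
    (hT : ∀ h, ‖T h‖ ≤ ‖h‖ / C) {ε : ℝ} (hε : 0 ≤ ε) {a b : E} {B : ℝ} (hab : ‖a - b‖ ≤ B) :
    ‖ε • T a - ε • T b‖ ≤ ε * (B / C) := by
  rw [← smul_sub, ← map_sub, norm_smul, Real.norm_of_nonneg hε]
  gcongr
  exact (hT _).trans (by gcongr)

section Convolution

variable {G : Type*} [MeasurableSpace G] [AddGroup G] [MeasurableAdd₂ G] [MeasurableNeg G]
  {μ : Measure G} [SFinite μ] [μ.IsAddLeftInvariant] [μ.IsAddRightInvariant] [μ.IsNegInvariant]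

theorem lintegral_convolution_sq_le {k f : G → ℝ≥0∞} (hk : AEMeasurable k μ)
    (hf : AEMeasurable f μ) :
    ∫⁻ x, (∫⁻ y, k (x - y) * f y ∂μ) ^ 2 ∂μ ≤ (∫⁻ x, k x ∂μ) ^ 2 * ∫⁻ y, f y ^ 2 ∂μ := by
  have hk_sub_left : ∀ x, AEMeasurable (fun y => k (x - y)) μ := fun x =>
    hk.comp_quasiMeasurePreserving (quasiMeasurePreserving_sub_left μ x)
  have hk_sub_right : ∀ y, AEMeasurable (fun x => k (x - y)) μ := fun y =>
    hk.comp_quasiMeasurePreserving (measurePreserving_sub_right μ y).quasiMeasurePreserving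
  have hprod : AEMeasurable (fun p : G × G => k (p.1 - p.2) * f p.2 ^ 2) (μ.prod μ) :=
    (hk.comp_quasiMeasurePreserving (quasiMeasurePreserving_sub μ μ)).mul
      (hf.pow_const 2).comp_snd
  calc ∫⁻ x, (∫⁻ y, k (x - y) * f y ∂μ) ^ 2 ∂μ
      ≤ ∫⁻ x, (∫⁻ x, k x ∂μ) * ∫⁻ y, k (x - y) * f y ^ 2 ∂μ ∂μ := by
        refine lintegral_mono fun x => ?_
        rw [← lintegral_sub_left_eq_self k x]
        exact lintegral_mul_sq_le (hk_sub_left x) hf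
    _ = (∫⁻ x, k x ∂μ) * ∫⁻ y, ∫⁻ x, k (x - y) * f y ^ 2 ∂μ ∂μ := by
        rw [lintegral_const_mul'' _ hprod.lintegral_prod_right', lintegral_lintegral_swap hprod]
    _ = (∫⁻ x, k x ∂μ) ^ 2 * ∫⁻ y, f y ^ 2 ∂μ := by
        simp_rw [lintegral_mul_const'' _ (hk_sub_right _), lintegral_sub_right_eq_self k]
        rw [lintegral_const_mul'' _ (hf.pow_const 2), ← mul_assoc, sq]

variable {K h f₁ f₂ : G → ℝ}

theorem lintegral_enorm_convolution_sq_le (hK : AEStronglyMeasurable K μ)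
    (hh : AEStronglyMeasurable h μ) :
    ∫⁻ x, (∫⁻ y, ‖K (x - y)‖ₑ * ‖h y‖ₑ ∂μ) ^ 2 ∂μ ≤ (eLpNorm K 1 μ * eLpNorm h 2 μ) ^ 2 := by
  rw [mul_pow, eLpNorm_one_eq_lintegral_enorm, eLpNorm_two_sq_eq_lintegral]
  exact lintegral_convolution_sq_le hK.enorm hh.enorm

theorem eLpNorm_convolution_le (hK : AEStronglyMeasurable K μ) (hh : AEStronglyMeasurable h μ) :
    eLpNorm (fun x => ∫ y, K (x - y) * h y ∂μ) 2 μ ≤ eLpNorm K 1 μ * eLpNorm h 2 μ := by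
  refine (ENNReal.pow_le_pow_left_iff two_ne_zero).mp ?_
  rw [eLpNorm_two_sq_eq_lintegral]
  refine le_trans (lintegral_mono fun x => ?_) (lintegral_enorm_convolution_sq_le hK hh)
  gcongr
  simpa only [enorm_mul] using enorm_integral_le_lintegral_enorm fun y => K (x - y) * h y

theorem ae_integrable_convolution_integrand (hK : Integrable K μ) (hh : MemLp h 2 μ) :
    ∀ᵐ x ∂μ, Integrable (fun y => K (x - y) * h y) μ := by
  have hmajorant : AEMeasurable (fun x => (∫⁻ y, ‖K (x - y)‖ₑ * ‖h y‖ₑ ∂μ) ^ 2) μ :=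
    ((hK.1.enorm.comp_quasiMeasurePreserving (quasiMeasurePreserving_sub μ μ)).mul
      hh.1.enorm.comp_snd).lintegral_prod_right'.pow_const 2
  have hfinite := (lintegral_enorm_convolution_sq_le hK.1 hh.1).trans_lt
    (ENNReal.pow_lt_top (ENNReal.mul_lt_top (memLp_one_iff_integrable.mpr hK).eLpNorm_lt_top
      hh.eLpNorm_lt_top))
  filter_upwards [ae_lt_top' hmajorant hfinite.ne] with x hx
  refine ⟨(hK.1.comp_quasiMeasurePreserving (quasiMeasurePreserving_sub_left μ x)).mul hh.1, ?_⟩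
  simpa only [HasFiniteIntegral, enorm_mul] using
    (ENNReal.pow_lt_top_iff.mp hx).resolve_right two_ne_zero

theorem eLpNorm_convolution_sub_le (hK : Integrable K μ) (hf₁ : MemLp f₁ 2 μ)
    (hf₂ : MemLp f₂ 2 μ) :
    eLpNorm ((fun x => ∫ y, K (x - y) * f₁ y ∂μ) - fun x => ∫ y, K (x - y) * f₂ y ∂μ) 2 μ ≤
      eLpNorm K 1 μ * eLpNorm (f₁ - f₂) 2 μ := by
  have hlinear : ((fun x => ∫ y, K (x - y) * f₁ y ∂μ) - fun x => ∫ y, K (x - y) * f₂ y ∂μ)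
      =ᵐ[μ] fun x => ∫ y, K (x - y) * (f₁ - f₂) y ∂μ := by
    filter_upwards [ae_integrable_convolution_integrand hK hf₁,
      ae_integrable_convolution_integrand hK hf₂] with x h₁ h₂
    simp only [Pi.sub_apply, mul_sub]
    exact (integral_sub h₁ h₂).symm
  rw [eLpNorm_congr_ae hlinear]
  exact eLpNorm_convolution_le hK.1 (hf₁.1.sub hf₂.1)

theorem norm_toLp_convolution_sub_le (hK : Integrable K μ) (hf₁ : MemLp f₁ 2 μ)
    (hf₂ : MemLp f₂ 2 μ) (hc₁ : MemLp (fun x => ∫ y, K (x - y) * f₁ y ∂μ) 2 μ)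
    (hc₂ : MemLp (fun x => ∫ y, K (x - y) * f₂ y ∂μ) 2 μ) (z : Lp ℝ 2 μ) {c : ℝ} (hc : 0 ≤ c)
    (hfz : ∀ᵐ y ∂μ, |f₁ y - f₂ y| ≤ c * |z y|) :
    ‖hc₁.toLp _ - hc₂.toLp _‖ ≤ (∫ x, |K x| ∂μ) * (c * ‖z‖) := by
  have hdiff : eLpNorm (f₁ - f₂) 2 μ ≤ ENNReal.ofReal c * eLpNorm z 2 μ :=
    eLpNorm_le_mul_eLpNorm_of_ae_le_mul hfz 2
  rw [← MemLp.toLp_sub, Lp.norm_toLp]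
  calc (eLpNorm _ 2 μ).toReal ≤ (eLpNorm K 1 μ * (ENNReal.ofReal c * eLpNorm z 2 μ)).toReal :=
        ENNReal.toReal_mono (ENNReal.mul_ne_top (memLp_one_iff_integrable.mpr hK).eLpNorm_ne_top
          (ENNReal.mul_ne_top ENNReal.ofReal_ne_top (Lp.eLpNorm_ne_top z)))
          ((eLpNorm_convolution_sub_le hK hf₁ hf₂).trans (by gcongr))
    _ = (∫ x, |K x| ∂μ) * (c * ‖z‖) := by
        rw [ENNReal.toReal_mul, ENNReal.toReal_mul, ENNReal.toReal_ofReal hc, ← Lp.norm_def,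
          eLpNorm_one_eq_lintegral_enorm, ← integral_norm_eq_lintegral_enorm hK.1]
        rfl

theorem contractingWith_smul_map_convolution_comp (hK : Integrable K μ) (u₀ : Lp ℝ 2 μ)
    {g : ℝ → ℝ} (hg : Differentiable ℝ g) (hg0 : g 0 = 0) {M : ℝ} (hgM : ∀ z, |deriv g z| ≤ M)
    (T : Lp ℝ 2 μ →ₗ[ℝ] Lp ℝ 2 μ) {C : ℝ} (hC : 0 < C) (hT : ∀ h, ‖T h‖ ≤ ‖h‖ / C) {ε : ℝ}
    (hε : 0 ≤ ε) (hconv : ∀ v : Lp ℝ 2 μ, MemLp (fun x => ∫ y, K (x - y) * g (u₀ y + v y) ∂μ) 2 μ)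
    (hσ : ε * M * (∫ x, |K x| ∂μ) / C < 1) :
    ContractingWith (ε * M * (∫ x, |K x| ∂μ) / C).toNNReal fun v => ε • T ((hconv v).toLp _) := by
  have hM0 : 0 ≤ M := (abs_nonneg _).trans (hgM 0)
  have hσ0 : 0 ≤ ε * M * (∫ x, |K x| ∂μ) / C := by positivity
  refine ⟨Real.toNNReal_lt_one.mpr hσ, LipschitzWith.of_dist_le_mul fun v w => ?_⟩
  rw [dist_eq_norm, dist_eq_norm, Real.coe_toNNReal _ hσ0]
  refine (norm_smul_map_sub_smul_map_le T hC hT hε (norm_toLp_convolution_sub_le hK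
    (((Lp.memLp u₀).add (Lp.memLp v)).comp_of_abs_deriv_le hg hg0 hgM)
    (((Lp.memLp u₀).add (Lp.memLp w)).comp_of_abs_deriv_le hg hg0 hgM)
    _ _ (v - w) hM0 ?_)).trans_eq (by field_simp)
  filter_upwards [Lp.coeFn_sub v w] with y hy
  rw [hy, Pi.sub_apply]
  simpa only [Pi.add_apply, add_sub_add_left_eq_sub] using
    abs_sub_le_of_abs_deriv_le hg hgM (u₀ y + v y) (u₀ y + w y)

theorem norm_smul_map_convolution_comp_sub_le (hK : Integrable K μ) (u₀ : Lp ℝ 2 μ)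
    {g₁ g₂ : ℝ → ℝ} (hg₁ : Differentiable ℝ g₁) (hg₂ : Differentiable ℝ g₂) (hg₁0 : g₁ 0 = 0)
    (hg₂0 : g₂ 0 = 0) {M₁ M₂ : ℝ} (hg₁M : ∀ z, |deriv g₁ z| ≤ M₁) (hg₂M : ∀ z, |deriv g₂ z| ≤ M₂)
    {δ : ℝ} (hδ : ∀ z, |deriv g₁ z - deriv g₂ z| ≤ δ) (T : Lp ℝ 2 μ →ₗ[ℝ] Lp ℝ 2 μ) {C : ℝ}
    (hC : 0 < C) (hT : ∀ h, ‖T h‖ ≤ ‖h‖ / C) {ε : ℝ} (hε : 0 ≤ ε) (v : Lp ℝ 2 μ)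
    (hconv₁ : MemLp (fun x => ∫ y, K (x - y) * g₁ (u₀ y + v y) ∂μ) 2 μ)
    (hconv₂ : MemLp (fun x => ∫ y, K (x - y) * g₂ (u₀ y + v y) ∂μ) 2 μ) :
    ‖ε • T (hconv₁.toLp _) - ε • T (hconv₂.toLp _)‖ ≤
      ε * ((∫ x, |K x| ∂μ) * (δ * ‖u₀ + v‖) / C) := by
  have hu : MemLp (fun y => u₀ y + v y) 2 μ := (Lp.memLp u₀).add (Lp.memLp v)
  refine norm_smul_map_sub_smul_map_le T hC hT hε (norm_toLp_convolution_sub_le hK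
    (hu.comp_of_abs_deriv_le hg₁ hg₁0 hg₁M) (hu.comp_of_abs_deriv_le hg₂ hg₂0 hg₂M) _ _
    (u₀ + v) ((abs_nonneg _).trans (hδ 0)) ?_)
  filter_upwards [Lp.coeFn_add u₀ v] with y hy
  rw [hy, Pi.add_apply]
  exact abs_sub_le_of_abs_deriv_sub_le hg₁ hg₂ hg₁0 hg₂0 hδ _

end Convolution

theorem solution_continuity_in_g_general (C M ε ρ : ℝ) (hC : 0 < C)
    (hε : 0 < ε) (hρ1 : ρ ≤ 1)
    (K : ℝ → ℝ) (hK : Integrable K (volume : Measure ℝ))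
    (u₀ : Lp ℝ 2 (volume : Measure ℝ))
    (g₁ g₂ : ℝ → ℝ) (hg₁ : Differentiable ℝ g₁) (hg₂ : Differentiable ℝ g₂)
    (hg₁0 : g₁ 0 = 0) (hg₂0 : g₂ 0 = 0)
    (hg₁' : ∀ z : ℝ, |deriv g₁ z| ≤ M) (hg₂' : ∀ z : ℝ, |deriv g₂ z| ≤ M)
    (T : Lp ℝ 2 (volume : Measure ℝ) →ₗ[ℝ] Lp ℝ 2 (volume : Measure ℝ))
    (hT : ∀ h : Lp ℝ 2 (volume : Measure ℝ), ‖T h‖ ≤ ‖h‖ / C)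
    (hconv₁ : ∀ v : Lp ℝ 2 (volume : Measure ℝ),
      MemLp (fun x : ℝ => ∫ y : ℝ, K (x - y) * g₁ (u₀ y + v y)) 2 (volume : Measure ℝ))
    (hconv₂ : ∀ v : Lp ℝ 2 (volume : Measure ℝ),
      MemLp (fun x : ℝ => ∫ y : ℝ, K (x - y) * g₂ (u₀ y + v y)) 2 (volume : Measure ℝ))
    (Φ₁ Φ₂ : Lp ℝ 2 (volume : Measure ℝ) → Lp ℝ 2 (volume : Measure ℝ))
    (hΦ₁ : ∀ v, Φ₁ v = ε • T ((hconv₁ v).toLp _))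
    (hΦ₂ : ∀ v, Φ₂ v = ε • T ((hconv₂ v).toLp _))
    (σ : ℝ) (hσdef : σ = ε * M * (∫ x : ℝ, |K x|) / C) (hσ : σ < 1)
    (u_p1 u_p2 : Lp ℝ 2 (volume : Measure ℝ))
    (h₂ρ : ‖u_p2‖ ≤ ρ)
    (hfix₁ : Φ₁ u_p1 = u_p1) (hfix₂ : Φ₂ u_p2 = u_p2)
    (δ : ℝ) (hδ : ∀ z : ℝ, |deriv g₁ z - deriv g₂ z| ≤ δ) :
    ‖u_p1 - u_p2‖ ≤
      (ε / (1 - σ)) * ((∫ x : ℝ, |K x|) / C) * (‖u₀‖ + 1) * δ := by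
  have hM0 : 0 ≤ M := (abs_nonneg _).trans (hg₁' 0)
  have hσ0 : 0 ≤ σ := hσdef ▸ by positivity
  have hcontr : ContractingWith σ.toNNReal Φ₁ := by
    rw [show Φ₁ = _ from funext hΦ₁, hσdef]
    exact contractingWith_smul_map_convolution_comp hK u₀ hg₁ hg₁0 hg₁' T hC hT hε.le hconv₁
      (hσdef ▸ hσ)
  have hperturb : ‖Φ₂ u_p2 - Φ₁ u_p2‖ ≤ ε * ((∫ x, |K x|) * (δ * (‖u₀‖ + 1)) / C) := by
    rw [hΦ₂, hΦ₁, norm_sub_rev]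
    refine (norm_smul_map_convolution_comp_sub_le hK u₀ hg₁ hg₂ hg₁0 hg₂0 hg₁' hg₂' hδ T hC hT
      hε.le u_p2 _ _).trans ?_
    gcongr
    · exact (abs_nonneg _).trans (hδ 0)
    · exact (norm_add_le _ _).trans (by linarith)
  calc ‖u_p1 - u_p2‖ = dist u_p2 u_p1 := by rw [dist_comm, dist_eq_norm]
    _ ≤ dist u_p2 (Φ₁ u_p2) / (1 - σ) := by
        simpa [Real.coe_toNNReal σ hσ0] using hcontr.dist_le_of_fixedPoint u_p2 hfix₁
    _ ≤ ε * ((∫ x, |K x|) * (δ * (‖u₀‖ + 1)) / C) / (1 - σ) := by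
        rw [dist_eq_norm]
        nth_rewrite 1 [← hfix₂]
        gcongr
    _ = (ε / (1 - σ)) * ((∫ x : ℝ, |K x|) / C) * (‖u₀‖ + 1) * δ := by ring

theorem solution_continuity_in_g (C M ε ρ : ℝ) (hC : 0 < C) (hM : 0 < M)
    (hε : 0 < ε) (hρ0 : 0 < ρ) (hρ1 : ρ ≤ 1)
    (K : ℝ → ℝ) (hK : Integrable K (volume : Measure ℝ))
    (u₀ : Lp ℝ 2 (volume : Measure ℝ))
    (g₁ g₂ : ℝ → ℝ) (hg₁ : Differentiable ℝ g₁) (hg₂ : Differentiable ℝ g₂)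
    (hg₁0 : g₁ 0 = 0) (hg₂0 : g₂ 0 = 0)
    (hg₁' : ∀ z : ℝ, |deriv g₁ z| ≤ M) (hg₂' : ∀ z : ℝ, |deriv g₂ z| ≤ M)
    (T : Lp ℝ 2 (volume : Measure ℝ) →ₗ[ℝ] Lp ℝ 2 (volume : Measure ℝ))
    (hT : ∀ h : Lp ℝ 2 (volume : Measure ℝ), ‖T h‖ ≤ ‖h‖ / C)
    (hconv₁ : ∀ v : Lp ℝ 2 (volume : Measure ℝ),
      MemLp (fun x : ℝ => ∫ y : ℝ, K (x - y) * g₁ (u₀ y + v y)) 2 (volume : Measure ℝ))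
    (hconv₂ : ∀ v : Lp ℝ 2 (volume : Measure ℝ),
      MemLp (fun x : ℝ => ∫ y : ℝ, K (x - y) * g₂ (u₀ y + v y)) 2 (volume : Measure ℝ))
    (Φ₁ Φ₂ : Lp ℝ 2 (volume : Measure ℝ) → Lp ℝ 2 (volume : Measure ℝ))
    (hΦ₁ : ∀ v, Φ₁ v = ε • T ((hconv₁ v).toLp _))
    (hΦ₂ : ∀ v, Φ₂ v = ε • T ((hconv₂ v).toLp _))
    (hεbound : ε ≤ ρ * C / (M * (∫ x : ℝ, |K x|) * (‖u₀‖ + 1)))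
    (σ : ℝ) (hσdef : σ = ε * M * (∫ x : ℝ, |K x|) / C) (hσ : σ < 1)
    (u_p1 u_p2 : Lp ℝ 2 (volume : Measure ℝ))
    (h₁ρ : ‖u_p1‖ ≤ ρ) (h₂ρ : ‖u_p2‖ ≤ ρ)
    (hfix₁ : Φ₁ u_p1 = u_p1) (hfix₂ : Φ₂ u_p2 = u_p2)
    (δ : ℝ) (hδ : ∀ z : ℝ, |deriv g₁ z - deriv g₂ z| ≤ δ) :
    ‖u_p1 - u_p2‖ ≤
      (ε / (1 - σ)) * ((∫ x : ℝ, |K x|) / C) * (‖u₀‖ + 1) * δ :=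
  solution_continuity_in_g_general C M ε ρ hC hε hρ1 K hK u₀ g₁ g₂ hg₁ hg₂ hg₁0 hg₂0 hg₁' hg₂' T hT
    hconv₁ hconv₂ Φ₁ Φ₂ hΦ₁ hΦ₂ σ hσdef hσ u_p1 u_p2 h₂ρ hfix₁ hfix₂ δ hδ
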